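/- Let l : 2^V → ℝ be submodular and increasing with l(∅) = 0. Then the Lovász hinge (increasing case) L1_l is a convex function on ℝ^p and is an extension of l, i.e. L1_l(1_A) = l(A) for every A ⊆ V. -/

import Mathlib

open Finset

/-- The chain {σ₁,…,σⱼ}: the image under σ of the first j indices. -/
def chainSet {p : ℕ} (σ : Equiv.Perm (Fin p)) (j : ℕ) : Finset (Fin p) :=
  (Finset.univ.filter fun k : Fin p => (k : ℕ) < j).image σ

/-- G_l(σ, s) = Σ_{j=1}^p s_{σ_j}·(l({σ₁,…,σⱼ}) − l({σ₁,…,σ_{j−1}})). -/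
def lovaszSum {p : ℕ} (l : Finset (Fin p) → ℝ) (σ : Equiv.Perm (Fin p))
    (s : Fin p → ℝ) : ℝ :=
  ∑ j : Fin p, s (σ j) * (l (chainSet σ ((j : ℕ) + 1)) - l (chainSet σ (j : ℕ)))

/-- Indicator vector 1_A ∈ {0,1}^p of A ⊆ V. -/
def indic {p : ℕ} (A : Finset (Fin p)) : Fin p → ℝ := fun i => if i ∈ A then 1 else 0

/-- A permutation sorting s in decreasing order: s_{π_1} ≥ … ≥ s_{π_p}. -/
def SortsDesc {p : ℕ} (π : Equiv.Perm (Fin p)) (s : Fin p → ℝ) : Prop :=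
  ∀ j k : Fin p, j ≤ k → s (π k) ≤ s (π j)

/-- A canonical permutation sorting s in decreasing order. -/
noncomputable def sortDesc {p : ℕ} (s : Fin p → ℝ) : Equiv.Perm (Fin p) :=
  Tuple.sort (fun i => -s i)

/-- The Lovász extension ℓ̂(s) = G_l(π, s) for a permutation π sorting s
decreasingly (independent of the choice of such π). -/
noncomputable def lovaszExt {p : ℕ} (l : Finset (Fin p) → ℝ) (s : Fin p → ℝ) : ℝ :=
  lovaszSum l (sortDesc s) s

/-- Submodularity: l(A) + l(B) ≥ l(A ∪ B) + l(A ∩ B). -/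
def Submodular {p : ℕ} (l : Finset (Fin p) → ℝ) : Prop :=
  ∀ A B : Finset (Fin p), l (A ∪ B) + l (A ∩ B) ≤ l A + l B

/-- The slack-rescaling surrogate S_l(s) = max_{I⊆V} l(I)·(1 − 2 Σ_{i∈I}(1 − s_i)). -/
noncomputable def slackSur {p : ℕ} (l : Finset (Fin p) → ℝ) (s : Fin p → ℝ) : ℝ :=
  Finset.univ.sup' Finset.univ_nonempty
    (fun I : Finset (Fin p) => l I * (1 - 2 * ∑ i ∈ I, (1 - s i)))

/-- The margin-rescaling surrogate M_l(s) = max_{I⊆V} ( l(I) − 2 Σ_{i∈I}(1 − s_i) ). -/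
noncomputable def marginSur {p : ℕ} (l : Finset (Fin p) → ℝ) (s : Fin p → ℝ) : ℝ :=
  Finset.univ.sup' Finset.univ_nonempty
    (fun I : Finset (Fin p) => l I - 2 * ∑ i ∈ I, (1 - s i))

/-- The Lovász hinge, general (non-monotonic) case. -/
noncomputable def hingeGen {p : ℕ} (l : Finset (Fin p) → ℝ) (s : Fin p → ℝ) : ℝ :=
  Finset.univ.sup' Finset.univ_nonempty
    (fun σ : Equiv.Perm (Fin p) => max 0 (lovaszSum l σ s))

/-- The Lovász hinge, increasing case (componentwise thresholding). -/
noncomputable def hingeInc {p : ℕ} (l : Finset (Fin p) → ℝ) (s : Fin p → ℝ) : ℝ :=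
  Finset.univ.sup' Finset.univ_nonempty
    (fun σ : Equiv.Perm (Fin p) =>
      ∑ j : Fin p, max (s (σ j)) 0 *
        (l (chainSet σ ((j : ℕ) + 1)) - l (chainSet σ (j : ℕ))))

/-! On a 0/1 vector, diminishing returns bound every increment of the chain sum by the increment of
`S ↦ l (S ∩ A)`, and these telescope to `l A`; a permutation listing `A` first attains the bound.
Convexity holds because, for increasing `l`, each chain sum is a nonnegative combination of the
convex functions `s ↦ max (s i) 0`, and a finite maximum of convex functions is convex. -/

theorem ConvexOn.finset_sup' {𝕜 E β ι : Type*} [Semiring 𝕜] [PartialOrder 𝕜] [AddCommMonoid E]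
    [AddCommMonoid β] [LinearOrder β] [IsOrderedAddMonoid β] [SMul 𝕜 E] [Module 𝕜 β]
    [PosSMulStrictMono 𝕜 β] {s : Set E} {t : Finset ι} (ht : t.Nonempty) {f : ι → E → β}
    (hf : ∀ i ∈ t, ConvexOn 𝕜 s (f i)) : ConvexOn 𝕜 s (fun x => t.sup' ht fun i => f i x) := by
  simpa only [← Finset.sup'_apply] using
    Finset.sup'_induction ht f (fun _ hg _ hh => hg.sup hh) hf

theorem Submodular.insert_sub_le {p : ℕ} {l : Finset (Fin p) → ℝ} (hsub : Submodular l)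
    {S T : Finset (Fin p)} (hST : S ⊆ T) {x : Fin p} (hx : x ∉ T) :
    l (insert x T) - l T ≤ l (insert x S) - l S := by
  have h := hsub (insert x S) T
  rw [insert_union, union_eq_right.mpr hST, insert_inter_of_notMem hx,
    inter_eq_left.mpr hST] at h
  linarith

section Chain

variable {p : ℕ}

theorem mem_chainSet {σ : Equiv.Perm (Fin p)} {j : ℕ} {x : Fin p} :
    x ∈ chainSet σ j ↔ (σ.symm x : ℕ) < j := by
  simp only [chainSet, mem_image, mem_filter, mem_univ, true_and]
  exact ⟨fun ⟨k, hk, hx⟩ => by simpa [← hx] using hk, fun h => ⟨σ.symm x, h, by simp⟩⟩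

theorem chainSet_succ (σ : Equiv.Perm (Fin p)) (j : Fin p) :
    chainSet σ ((j : ℕ) + 1) = insert (σ j) (chainSet σ (j : ℕ)) := by
  ext x
  rw [mem_insert, mem_chainSet, mem_chainSet, Nat.lt_succ_iff_lt_or_eq, Fin.val_inj,
    Equiv.symm_apply_eq]
  tauto

theorem sum_chainSet_sub {α : Type*} [AddCommGroup α] (g : Finset (Fin p) → α)
    (σ : Equiv.Perm (Fin p)) :
    ∑ j : Fin p, (g (chainSet σ ((j : ℕ) + 1)) - g (chainSet σ (j : ℕ))) = g univ - g ∅ := by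
  have h_top : chainSet σ p = univ := by ext x; simp [mem_chainSet]
  have h_zero : chainSet σ 0 = ∅ := by ext x; simp [mem_chainSet]
  rw [Fin.sum_univ_eq_sum_range (fun j => g (chainSet σ (j + 1)) - g (chainSet σ j)),
    sum_range_sub (fun j => g (chainSet σ j)), h_top, h_zero]

end Chain

section Extension

variable {p : ℕ} {l : Finset (Fin p) → ℝ} {σ : Equiv.Perm (Fin p)} {A : Finset (Fin p)}

theorem indic_mul_sub_le (hsub : Submodular l) (j : Fin p) :
    indic A (σ j) * (l (chainSet σ ((j : ℕ) + 1)) - l (chainSet σ (j : ℕ)))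
      ≤ l (chainSet σ ((j : ℕ) + 1) ∩ A) - l (chainSet σ (j : ℕ) ∩ A) := by
  rw [chainSet_succ]
  by_cases h : σ j ∈ A
  · rw [insert_inter_of_mem h, indic, if_pos h, one_mul]
    exact hsub.insert_sub_le inter_subset_left (by simp [mem_chainSet])
  · simp [insert_inter_of_notMem h, indic, h]

theorem indic_mul_sub_eq {j : Fin p} (hj : σ j ∈ A → chainSet σ (j : ℕ) ⊆ A) :
    indic A (σ j) * (l (chainSet σ ((j : ℕ) + 1)) - l (chainSet σ (j : ℕ)))
      = l (chainSet σ ((j : ℕ) + 1) ∩ A) - l (chainSet σ (j : ℕ) ∩ A) := by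
  rw [chainSet_succ]
  by_cases h : σ j ∈ A
  · rw [insert_inter_of_mem h, inter_eq_left.mpr (hj h), indic, if_pos h, one_mul]
  · simp [insert_inter_of_notMem h, indic, h]

theorem lovaszSum_indic_le (hsub : Submodular l) : lovaszSum l σ (indic A) ≤ l A - l ∅ := by
  calc lovaszSum l σ (indic A)
      ≤ ∑ j : Fin p, (l (chainSet σ ((j : ℕ) + 1) ∩ A) - l (chainSet σ (j : ℕ) ∩ A)) :=
        sum_le_sum fun j _ => indic_mul_sub_le hsub j
    _ = l A - l ∅ := by simpa using sum_chainSet_sub (fun S => l (S ∩ A)) σ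

theorem lovaszSum_indic_of_sortsDesc (hσ : SortsDesc σ (indic A)) :
    lovaszSum l σ (indic A) = l A - l ∅ := by
  have h_prefix (j : Fin p) (hj : σ j ∈ A) : chainSet σ (j : ℕ) ⊆ A := by
    intro x hx
    have hle := hσ (σ.symm x) j (Fin.le_of_lt (by simpa [mem_chainSet] using hx))
    by_contra hxA
    norm_num [indic, hj, hxA] at hle
  calc lovaszSum l σ (indic A)
      = ∑ j : Fin p, (l (chainSet σ ((j : ℕ) + 1) ∩ A) - l (chainSet σ (j : ℕ) ∩ A)) :=
        sum_congr rfl fun j _ => indic_mul_sub_eq (h_prefix j)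
    _ = l A - l ∅ := by simpa using sum_chainSet_sub (fun S => l (S ∩ A)) σ

theorem sortDesc_sortsDesc (s : Fin p → ℝ) : SortsDesc (sortDesc s) s :=
  fun _ _ hjk => neg_le_neg_iff.mp (Tuple.monotone_sort (fun i => -s i) hjk)

end Extension

section Convexity

variable {p : ℕ} {l : Finset (Fin p) → ℝ}

theorem hingeInc_eq_sup'_lovaszSum (s : Fin p → ℝ) :
    hingeInc l s = univ.sup' univ_nonempty fun σ => lovaszSum l σ fun i => max (s i) 0 :=
  rfl

theorem lovaszSum_mono (hl : Monotone l) (σ : Equiv.Perm (Fin p)) : Monotone (lovaszSum l σ) :=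
  fun _ _ hst => sum_le_sum fun j _ =>
    mul_le_mul_of_nonneg_right (hst _) (sub_nonneg.mpr (hl (by simp [chainSet_succ])))

theorem lovaszSum_add_smul (σ : Equiv.Perm (Fin p)) (a b : ℝ) (s t : Fin p → ℝ) :
    lovaszSum l σ (a • s + b • t) = a * lovaszSum l σ s + b * lovaszSum l σ t := by
  simp only [lovaszSum, Pi.add_apply, Pi.smul_apply, smul_eq_mul, mul_sum, ← sum_add_distrib]
  exact sum_congr rfl fun j _ => by ring

theorem convexOn_lovaszSum_max_zero (hl : Monotone l) (σ : Equiv.Perm (Fin p)) :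
    ConvexOn ℝ Set.univ fun s : Fin p → ℝ => lovaszSum l σ fun i => max (s i) 0 := by
  have h_max : ConvexOn ℝ Set.univ fun x : ℝ => max x 0 :=
    (convexOn_id convex_univ).sup (convexOn_const 0 convex_univ)
  refine ⟨convex_univ, fun s _ t _ a b ha hb hab => ?_⟩
  calc lovaszSum l σ (fun i => max ((a • s + b • t) i) 0)
      ≤ lovaszSum l σ (a • (fun i => max (s i) 0) + b • fun i => max (t i) 0) :=
        lovaszSum_mono hl σ fun i =>
          h_max.2 (Set.mem_univ (s i)) (Set.mem_univ (t i)) ha hb hab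
    _ = _ := lovaszSum_add_smul σ a b _ _

end Convexity

theorem hingeInc_convex_and_extension_general (p : ℕ)
    (l : Finset (Fin p) → ℝ) (hsub : Submodular l)
    (hinc : ∀ A B : Finset (Fin p), A ⊆ B → l A ≤ l B) (h0 : l ∅ = 0) :
    ConvexOn ℝ Set.univ (hingeInc l) ∧
      ∀ A : Finset (Fin p), hingeInc l (indic A) = l A := by
  refine ⟨ConvexOn.finset_sup' univ_nonempty fun σ _ =>
    convexOn_lovaszSum_max_zero (fun A B => hinc A B) σ, fun A => ?_⟩
  have h_indic : (fun i => max (indic A i) 0) = indic A :=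
    funext fun i => max_eq_left (by unfold indic; split_ifs <;> norm_num)
  rw [hingeInc_eq_sup'_lovaszSum, h_indic]
  refine le_antisymm (sup'_le _ _ fun σ _ => ?_) ?_
  · simpa [h0] using lovaszSum_indic_le (σ := σ) (A := A) hsub
  · calc l A = lovaszSum l (sortDesc (indic A)) (indic A) := by
          rw [lovaszSum_indic_of_sortsDesc (sortDesc_sortsDesc _), h0, sub_zero]
      _ ≤ _ := le_sup' (fun σ => lovaszSum l σ (indic A)) (mem_univ _)

/-- for submodular increasing l with l(∅)=0, the Lovász hinge
(increasing case) is convex on ℝ^p and is an extension of l. -/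
theorem hingeInc_convex_and_extension (p : ℕ) (hp : 1 ≤ p)
    (l : Finset (Fin p) → ℝ) (hsub : Submodular l)
    (hinc : ∀ A B : Finset (Fin p), A ⊆ B → l A ≤ l B) (h0 : l ∅ = 0) :
    ConvexOn ℝ Set.univ (hingeInc l) ∧
      ∀ A : Finset (Fin p), hingeInc l (indic A) = l A :=
  hingeInc_convex_and_extension_general p l hsub hinc h0
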